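/- arXiv:2309.06437 — 2 statements merged into one kernel-verified Lean document; each statement's English description precedes it below -/
import Mathlib

section
/- Let d ≥ 1, let τ : ℤ^d → ℤ be a shift, let N be a positive integer, let 0 < α < 1/2, and let u ∈ ℤ^d be such that |τ^rough_N(Nu) − τ_N(Nu)| > α. Then TV(τ; Q_N(Nu)) ≥ (2α/3)·N^{d−1}. -/
/-!
Write `φ x = |x - [x]|` for the distance to the nearest integer; `φ` is 1-Lipschitz and vanishes
at the values of `τ`. Slice the cube `Q` of side `N` along the first coordinate and let `g k` be
the average over the `k`-th slice. The average `A` over `Q` is the mean of the `g k`, so it lies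
within `V = ∑ |g (k+1) - g k|` of every `g k`, and `N^(d-1) V` is at most the variation of `τ`
across slices. Hence `N φ(A) ≤ ∑ₖ φ(g k) + N V`, and induction on the dimension gives the
discrete Poincaré-type bound `φ(A) N^(d-1) ≤ TV(τ; Q)`; finally `2α/3 < α < φ(A)`.
-/

namespace DF

/-- The base lattice `ℤ^d`. -/
abbrev Base (d : ℕ) := Fin d → ℤ

/-- ℓ¹ distance on the base lattice. -/
def dist1 {d : ℕ} (u v : Base d) : ℤ := ∑ i, |u i - v i|

/-- Nearest-neighbour adjacency on the base lattice. -/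
def baseAdj {d : ℕ} (u v : Base d) : Prop := dist1 u v = 1

/-- Edges of the base lattice `ℤ^d`: unordered pairs at ℓ¹-distance 1. -/
def IsBaseEdge {d : ℕ} (e : Sym2 (Base d)) : Prop :=
  ∃ u v : Base d, baseAdj u v ∧ e = s(u, v)

/-- `|τ u − τ v|` over an unordered pair. -/
def pairAbsDiff {d : ℕ} (τ : Base d → ℤ) : Sym2 (Base d) → ℤ :=
  Sym2.lift ⟨fun u v => |τ u - τ v|, fun _ _ => abs_sub_comm _ _⟩

/-- A shift: a finitely supported `τ : ℤ^d → ℤ`. -/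
def IsShift {d : ℕ} (τ : Base d → ℤ) : Prop := {v | τ v ≠ 0}.Finite

/-- Total variation of a shift: the sum of `|τ u − τ v|` over all edges. -/
noncomputable def TV {d : ℕ} (τ : Base d → ℤ) : ℤ :=
  ∑ᶠ e ∈ {e : Sym2 (Base d) | IsBaseEdge e}, pairAbsDiff τ e

/-- Total variation of `τ` restricted to edges with both endpoints in `A`. -/
noncomputable def TVon {d : ℕ} (τ : Base d → ℤ) (A : Set (Base d)) : ℤ :=
  ∑ᶠ e ∈ {e : Sym2 (Base d) | IsBaseEdge e ∧ ∀ x ∈ e, x ∈ A}, pairAbsDiff τ e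

/-- The discrete cube `Q_N(c) = c + {0,1,…,N−1}^d` as a finset. -/
noncomputable def cubeFinset {d : ℕ} (N : ℕ) (c : Base d) : Finset (Base d) :=
  Fintype.piFinset fun i => Finset.Ico (c i) (c i + (N : ℤ))

/-- The base point `N·⌊u/N⌋` of the cube of side `N` containing `u`. -/
def cubePt {d : ℕ} (N : ℕ) (u : Base d) : Base d := fun i => N * Int.fdiv (u i) N

/-- The average `τ^rough_N(u)` of `τ` over the cube of the partition `𝒫_N`
containing `u`. -/
noncomputable def roughAvg {d : ℕ} (N : ℕ) (τ : Base d → ℤ) (u : Base d) : ℝ :=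
  (∑ w ∈ cubeFinset N (cubePt N u), (τ w : ℝ)) / (N : ℝ) ^ d

/-- The integer nearest to `a`, with the convention `[k + 1/2] = k`. -/
noncomputable def nearestInt (a : ℝ) : ℤ := ⌈a - 1 / 2⌉

/-- The coarse graining `τ_N`. -/
noncomputable def coarse {d : ℕ} (N : ℕ) (τ : Base d → ℤ) (u : Base d) : ℤ :=
  nearestInt (roughAvg N τ u)

end DF

open DF

namespace DF

open Finset

lemma nearestInt_intCast (k : ℤ) : nearestInt k = k := by
  rw [nearestInt, Int.ceil_eq_iff]
  constructor <;> linarith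

lemma abs_sub_nearestInt_le_half (x : ℝ) : |x - nearestInt x| ≤ 1 / 2 := by
  have h₁ : x - 1 / 2 ≤ nearestInt x := Int.le_ceil _
  have h₂ : (nearestInt x : ℝ) < x - 1 / 2 + 1 := Int.ceil_lt_add_one _
  rw [abs_le]
  constructor <;> linarith

lemma abs_sub_nearestInt_le (x : ℝ) (k : ℤ) : |x - nearestInt x| ≤ |x - k| := by
  obtain rfl | hk := eq_or_ne k (nearestInt x)
  · rfl
  have hgap : (1 : ℝ) ≤ |(nearestInt x : ℝ) - k| := by
    exact_mod_cast Int.one_le_abs (sub_ne_zero.2 hk.symm)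
  have htri : |(nearestInt x : ℝ) - k| ≤ |x - nearestInt x| + |x - k| := by
    simpa [abs_sub_comm] using abs_sub_le (nearestInt x : ℝ) x k
  linarith [abs_sub_nearestInt_le_half x]

lemma lipschitzWith_abs_sub_nearestInt : LipschitzWith 1 fun x : ℝ => |x - nearestInt x| :=
  LipschitzWith.of_le_add fun x y =>
    calc |x - nearestInt x| ≤ |x - nearestInt y| := abs_sub_nearestInt_le x _
      _ ≤ |x - y| + |y - nearestInt y| := abs_sub_le x y _
      _ = |y - nearestInt y| + dist x y := by rw [Real.dist_eq, add_comm]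

variable {d : ℕ}

lemma sum_Ico_add_natCast {M : Type*} [AddCommMonoid M] (a : ℤ) (N : ℕ) (G : ℤ → M) :
    ∑ t ∈ Ico a (a + N), G t = ∑ k ∈ range N, G (a + k) := by
  rw [Int.Ico_eq_finset_map, sum_map, add_sub_cancel_left, Int.toNat_natCast]
  rfl

lemma sum_cubeFinset_succ {M : Type*} [AddCommMonoid M] (N : ℕ) (c : Base (d + 1))
    (F : Base (d + 1) → M) :
    ∑ w ∈ cubeFinset N c, F w =
      ∑ k ∈ range N, ∑ x ∈ cubeFinset N (Fin.tail c), F (Fin.cons (c 0 + k) x) := by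
  have h := filter_piFinset_eq_map_consEquiv (fun i => Ico (c i) (c i + N)) fun _ => True
  rw [filter_true, filter_true] at h
  rw [cubeFinset, h, sum_map, sum_product, sum_Ico_add_natCast]
  rfl

lemma cons_mem_cubeFinset_iff {N : ℕ} {c : Base (d + 1)} {t : ℤ} {x : Base d} :
    (Fin.cons t x : Base (d + 1)) ∈ cubeFinset N c ↔
      t ∈ Ico (c 0) (c 0 + N) ∧ x ∈ cubeFinset N (Fin.tail c) := by
  simp only [cubeFinset, Fin.mem_piFinset_iff_zero_tail, Fin.cons_zero, Fin.tail_cons]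
  rfl

noncomputable def cubeAvg (N : ℕ) (c : Base d) (σ : Base d → ℝ) : ℝ :=
  (∑ w ∈ cubeFinset N c, σ w) / (N : ℝ) ^ d

-- `TV(σ; Q_N(c))`, each edge counted once as the pair `(w, w + eᵢ)`.
noncomputable def cubeVariation (N : ℕ) (c : Base d) (σ : Base d → ℝ) : ℝ :=
  ∑ i, ∑ w ∈ cubeFinset N c,
    if w + Pi.single i 1 ∈ cubeFinset N c then |σ (w + Pi.single i 1) - σ w| else 0

lemma cubeAvg_succ (N : ℕ) (c : Base (d + 1)) (σ : Base (d + 1) → ℝ) :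
    cubeAvg N c σ =
      (∑ k ∈ range N, cubeAvg N (Fin.tail c) fun x => σ (Fin.cons (c 0 + k) x)) / N := by
  simp only [cubeAvg]
  rw [sum_cubeFinset_succ, ← sum_div, div_div, pow_succ]

lemma cons_add_single_zero (t : ℤ) (x : Base d) :
    (Fin.cons t x : Base (d + 1)) + Pi.single 0 1 = Fin.cons (t + 1) x := by
  funext i
  refine Fin.cases ?_ (fun j => ?_) i <;> simp [Fin.succ_ne_zero]

lemma cons_add_single_succ (t : ℤ) (x : Base d) (j : Fin d) :
    (Fin.cons t x : Base (d + 1)) + Pi.single j.succ 1 = Fin.cons t (x + Pi.single j 1) := by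
  funext i
  refine Fin.cases ?_ (fun k => ?_) i <;> simp [Pi.single_apply, Fin.succ_ne_zero]

lemma cubeVariation_succ (N : ℕ) (c : Base (d + 1)) (σ : Base (d + 1) → ℝ) :
    cubeVariation N c σ =
      ∑ k ∈ range (N - 1), ∑ x ∈ cubeFinset N (Fin.tail c),
          |σ (Fin.cons (c 0 + (k + 1 : ℕ)) x) - σ (Fin.cons (c 0 + k) x)| +
        ∑ k ∈ range N, cubeVariation N (Fin.tail c) fun x => σ (Fin.cons (c 0 + k) x) := by
  rw [cubeVariation, Fin.sum_univ_succ]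
  congr 1
  · have hrange : range (N - 1) = (range N).filter (· + 1 < N) := by
      ext k
      simp only [mem_filter, mem_range]
      omega
    rw [sum_cubeFinset_succ, hrange, sum_filter]
    refine sum_congr rfl fun k _ => ?_
    simp only [cons_add_single_zero, cons_mem_cubeFinset_iff, mem_Ico]
    split_ifs with hk
    · refine sum_congr rfl fun x hx => ?_
      rw [if_pos ⟨by omega, hx⟩]
      push_cast
      rw [add_assoc]
    · exact sum_eq_zero fun x _ => if_neg fun h => hk (by omega)
  · simp only [cubeVariation]
    conv_rhs => rw [sum_comm]
    refine sum_congr rfl fun j _ => ?_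
    rw [sum_cubeFinset_succ]
    refine sum_congr rfl fun k hk => sum_congr rfl fun x _ => ?_
    have hk : c 0 + k ∈ Ico (c 0) (c 0 + N) := by
      simp only [mem_range, mem_Ico] at hk ⊢
      omega
    simp only [cons_add_single_succ, cons_mem_cubeFinset_iff, hk, true_and]

lemma abs_sub_le_sum_range_abs_sub (g : ℕ → ℝ) {N m n : ℕ} (hm : m < N) (hn : n < N) :
    |g m - g n| ≤ ∑ k ∈ range (N - 1), |g (k + 1) - g k| := by
  wlog hmn : m ≤ n generalizing m n
  · rw [abs_sub_comm]
    exact this hn hm (by omega)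
  calc |g m - g n| = dist (g m) (g n) := (Real.dist_eq _ _).symm
    _ ≤ ∑ k ∈ Ico m n, dist (g k) (g (k + 1)) := dist_le_Ico_sum_dist g hmn
    _ ≤ ∑ k ∈ range (N - 1), dist (g k) (g (k + 1)) :=
      sum_le_sum_of_subset_of_nonneg (fun k hk => by simp only [mem_Ico, mem_range] at *; omega)
        fun _ _ _ => dist_nonneg
    _ = ∑ k ∈ range (N - 1), |g (k + 1) - g k| := by simp only [Real.dist_eq, abs_sub_comm]

lemma abs_avg_sub_le (g : ℕ → ℝ) {N n : ℕ} (hn : n < N) :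
    |(∑ k ∈ range N, g k) / N - g n| ≤ ∑ k ∈ range (N - 1), |g (k + 1) - g k| := by
  set V := ∑ k ∈ range (N - 1), |g (k + 1) - g k|
  have hN : (0 : ℝ) < N := by exact_mod_cast n.zero_le.trans_lt hn
  have hcentre : (∑ k ∈ range N, g k) / N - g n = (∑ k ∈ range N, (g k - g n)) / N := by
    rw [sum_sub_distrib, sum_const, card_range, nsmul_eq_mul]
    field_simp
  rw [hcentre, abs_div, abs_of_pos hN, div_le_iff₀ hN]
  calc |∑ k ∈ range N, (g k - g n)| ≤ ∑ k ∈ range N, |g k - g n| := abs_sum_le_sum_abs _ _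
    _ ≤ ∑ _k ∈ range N, V :=
      sum_le_sum fun k hk => abs_sub_le_sum_range_abs_sub g (mem_range.1 hk) hn
    _ = V * N := by rw [sum_const, card_range, nsmul_eq_mul, mul_comm]

lemma abs_sub_cubeAvg_mul_pow_le {N : ℕ} (hN : 0 < N) (c : Base d) (σ σ' : Base d → ℝ) :
    |cubeAvg N c σ - cubeAvg N c σ'| * N ^ d ≤ ∑ w ∈ cubeFinset N c, |σ w - σ' w| := by
  have hpow : (0 : ℝ) < (N : ℝ) ^ d := by positivity
  rw [cubeAvg, cubeAvg, div_sub_div_same, abs_div, abs_of_pos hpow, div_mul_cancel₀ _ hpow.ne',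
    ← sum_sub_distrib]
  exact abs_sum_le_sum_abs _ _

lemma apply_cubeAvg_mul_pow_le {φ : ℝ → ℝ} (hφ : LipschitzWith 1 φ) {N : ℕ} (hN : 0 < N)
    (c : Base d) (σ : Base d → ℝ) (hσ : ∀ w, φ (σ w) ≤ 0) :
    φ (cubeAvg N c σ) * N ^ d ≤ N * cubeVariation N c σ := by
  induction d with
  | zero =>
    have hcube : cubeFinset N c = {c} := by
      rw [cubeFinset, Fintype.piFinset_of_isEmpty, univ_unique]
      exact congrArg _ (Subsingleton.elim _ _)
    simpa [cubeAvg, cubeVariation, hcube] using hσ c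
  | succ d ih =>
    set g : ℕ → ℝ := fun k => cubeAvg N (Fin.tail c) fun x => σ (Fin.cons (c 0 + k) x)
    set V := ∑ k ∈ range (N - 1), |g (k + 1) - g k|
    set A := cubeAvg N c σ
    have hA : A = (∑ k ∈ range N, g k) / N := cubeAvg_succ N c σ
    have hslice : ∀ k ∈ range N, φ A ≤ φ (g k) + V := fun k hk =>
      calc φ A ≤ φ (g k) + dist A (g k) := by simpa using hφ.le_add_mul A (g k)
        _ ≤ φ (g k) + V := by
          rw [hA, Real.dist_eq]
          gcongr
          exact abs_avg_sub_le g (mem_range.1 hk)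
    have hcross : V * N ^ d ≤ ∑ k ∈ range (N - 1), ∑ x ∈ cubeFinset N (Fin.tail c),
        |σ (Fin.cons (c 0 + (k + 1 : ℕ)) x) - σ (Fin.cons (c 0 + k) x)| := by
      rw [sum_mul]
      exact sum_le_sum fun k _ => abs_sub_cubeAvg_mul_pow_le hN _ _ _
    calc φ A * N ^ (d + 1) = ∑ _k ∈ range N, φ A * N ^ d := by
          rw [sum_const, card_range, nsmul_eq_mul, pow_succ]
          ring
      _ ≤ ∑ k ∈ range N, (φ (g k) * N ^ d + V * N ^ d) := sum_le_sum fun k hk => by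
          rw [← add_mul]
          exact mul_le_mul_of_nonneg_right (hslice k hk) (by positivity)
      _ ≤ ∑ k ∈ range N, N * cubeVariation N (Fin.tail c) (fun x => σ (Fin.cons (c 0 + k) x)) +
            N * (V * N ^ d) := by
          rw [sum_add_distrib, sum_const, card_range, nsmul_eq_mul]
          exact add_le_add (sum_le_sum fun k _ => ih _ _ fun _ => hσ _) le_rfl
      _ ≤ N * cubeVariation N c σ := by
          rw [cubeVariation_succ, mul_add, ← mul_sum, add_comm]
          gcongr

lemma baseAdj_add_single (w : Base d) (i : Fin d) : baseAdj w (w + Pi.single i 1) := by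
  simp [baseAdj, dist1, Pi.single_apply, apply_ite]

lemma mk_add_single_injective :
    Function.Injective fun p : Base d × Fin d => s(p.1, p.1 + Pi.single p.2 1) := by
  rintro ⟨w, i⟩ ⟨w', j⟩ h
  rcases Sym2.eq_iff.1 h with ⟨rfl, hij⟩ | ⟨rfl, hloop⟩
  · have h := congrFun (add_left_cancel hij) i
    simp only [Pi.single_apply, if_true] at h
    split_ifs at h with hji
    · rw [hji]
    · exact absurd h one_ne_zero
  · have h := congrFun hloop j
    simp only [Pi.add_apply, Pi.single_apply] at h
    split_ifs at h <;> omega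

open Classical in
lemma TVon_coe_finset (τ : Base d → ℤ) (A : Finset (Base d)) :
    TVon τ A = ∑ e ∈ A.sym2 with IsBaseEdge e, pairAbsDiff τ e := by
  rw [TVon, ← finsum_mem_coe_finset]
  congr
  ext e
  simp [mem_sym2_iff, and_comm]

lemma cubeVariation_intCast_le_TVon (N : ℕ) (c : Base d) (τ : Base d → ℤ) :
    cubeVariation N c (fun w => (τ w : ℝ)) ≤ TVon τ (cubeFinset N c) := by
  classical
  set P := (cubeFinset N c ×ˢ univ).filter
    fun p : Base d × Fin d => p.1 + Pi.single p.2 1 ∈ cubeFinset N c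
  have hvar : cubeVariation N c (fun w => (τ w : ℝ)) =
      ∑ p ∈ P, (pairAbsDiff τ s(p.1, p.1 + Pi.single p.2 1) : ℝ) := by
    rw [cubeVariation, sum_comm, sum_filter, sum_product]
    push_cast
    simp [pairAbsDiff, abs_sub_comm]
  rw [hvar, TVon_coe_finset, Int.cast_sum,
    ← sum_image (f := fun e => (pairAbsDiff τ e : ℝ)) mk_add_single_injective.injOn]
  refine sum_le_sum_of_subset_of_nonneg ?_ fun e _ _ =>
    Int.cast_nonneg (e.ind fun _ _ => abs_nonneg _)
  intro e he
  obtain ⟨⟨w, i⟩, hp, rfl⟩ := mem_image.1 he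
  obtain ⟨hw, hwi⟩ := mem_filter.1 hp
  exact mem_filter.2 ⟨mk_mem_sym2_iff.2 ⟨(mem_product.1 hw).1, hwi⟩,
    ⟨w, _, baseAdj_add_single w i, rfl⟩⟩

lemma roughAvg_natCast_mul {N : ℕ} (hN : 0 < N) (τ : Base d → ℤ) (u : Base d) :
    roughAvg N τ (fun i => N * u i) = cubeAvg N (fun i => N * u i) fun w => τ w := by
  have hpt : cubePt N (fun i => (N : ℤ) * u i) = fun i => N * u i :=
    funext fun i => by simp [cubePt, Int.mul_fdiv_cancel_left _ (Int.natCast_ne_zero.2 hN.ne')]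
  rw [roughAvg, hpt]
  rfl

end DF

theorem rounding_gap_forces_variation_general
    (d : ℕ) (hd : 1 ≤ d) (τ : Base d → ℤ) (N : ℕ) (hN : 0 < N)
    (α : ℝ) (hα0 : 0 < α) (u : Base d)
    (h : α < |roughAvg N τ (fun i => (N : ℤ) * u i) -
        (coarse N τ (fun i => (N : ℤ) * u i) : ℝ)|) :
    (2 * α / 3) * (N : ℝ) ^ (d - 1) ≤
      (TVon τ (cubeFinset N (fun i => (N : ℤ) * u i) : Set (Base d)) : ℝ) := by
  obtain ⟨k, rfl⟩ : ∃ k, d = k + 1 := ⟨d - 1, by omega⟩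
  set c : Base (k + 1) := fun i => (N : ℤ) * u i
  set A := cubeAvg N c fun w => τ w
  have hgap : α < |A - nearestInt A| := by
    rwa [coarse, roughAvg_natCast_mul hN] at h
  have hpoincare : |A - nearestInt A| * N ^ (k + 1) ≤ N * cubeVariation N c fun w => τ w :=
    apply_cubeAvg_mul_pow_le lipschitzWith_abs_sub_nearestInt hN c _ fun w => by
      simp [nearestInt_intCast]
  have hNpos : (0 : ℝ) < N := by exact_mod_cast hN
  calc 2 * α / 3 * N ^ (k + 1 - 1) ≤ |A - nearestInt A| * N ^ k := by
        rw [Nat.add_sub_cancel]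
        gcongr
        linarith [hgap]
    _ ≤ cubeVariation N c fun w => τ w := by
        rw [pow_succ] at hpoincare
        exact le_of_mul_le_mul_left (by linarith) hNpos
    _ ≤ TVon τ (cubeFinset N c) := cubeVariation_intCast_le_TVon N c τ

/-- If `|τ^rough_N(Nu) − τ_N(Nu)| > α` for some `0 < α < 1/2`, then
`TV(τ; Q_N(Nu)) ≥ (2α/3) N^{d−1}`. -/
theorem rounding_gap_forces_variation
    (d : ℕ) (hd : 1 ≤ d) (τ : Base d → ℤ) (hτ : IsShift τ) (N : ℕ) (hN : 0 < N)
    (α : ℝ) (hα0 : 0 < α) (hα1 : α < 1 / 2) (u : Base d)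
    (h : α < |roughAvg N τ (fun i => (N : ℤ) * u i) -
        (coarse N τ (fun i => (N : ℤ) * u i) : ℝ)|) :
    (2 * α / 3) * (N : ℝ) ^ (d - 1) ≤
      (TVon τ (cubeFinset N (fun i => (N : ℤ) * u i) : Set (Base d)) : ℝ) :=
  rounding_gap_forces_variation_general d hd τ N hN α hα0 u h
end

section
/- Let d ≥ 1 and let τ : ℤ^d → ℤ be a shift. For each integer 0 ≤ r ≤ d there exists a set I ⊆ [d] with |I| = r that is compatible with τ, i.e., TV(τ_I) ≤ 20·(2|I|+1)·TV(τ) and ‖τ_I − τ‖₁ ≤ (4|I|/d)·TV(τ). -/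
namespace DF

/-- The base point of the box of the partition `𝒫_I` containing `u`: side 2 in the
directions of `I`, side 1 elsewhere. -/
def cellPt {d : ℕ} (I : Finset (Fin d)) (u : Base d) : Base d :=
  fun i => if i ∈ I then 2 * Int.fdiv (u i) 2 else u i

/-- The box `c + {0,1}^I × {0}^{[d]∖I}` of the partition `𝒫_I` as a finset. -/
noncomputable def cellFinset {d : ℕ} (I : Finset (Fin d)) (c : Base d) : Finset (Base d) :=
  Fintype.piFinset fun i => if i ∈ I then Finset.Ico (c i) (c i + 2) else {c i}

/-- The fine graining `τ_I`. -/
noncomputable def fine {d : ℕ} (I : Finset (Fin d)) (τ : Base d → ℤ) (u : Base d) : ℤ :=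
  nearestInt ((∑ w ∈ cellFinset I (cellPt I u), (τ w : ℝ)) / 2 ^ I.card)

end DF

open DF

open Function Finset

lemma exists_eq_single_of_sum_abs_eq_one {ι : Type*} [Fintype ι] [DecidableEq ι] {w : ι → ℤ}
    (h : ∑ i, |w i| = 1) : ∃ j, w = Pi.single j 1 ∨ w = Pi.single j (-1) := by
  obtain ⟨j, -, hj⟩ := exists_ne_zero_of_sum_ne_zero (h ▸ one_ne_zero : ∑ i, |w i| ≠ 0)
  have hwj : |w j| = 1 := by
    have := single_le_sum (fun i _ => abs_nonneg (w i)) (mem_univ j)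
    have := Int.one_le_abs (abs_ne_zero.1 hj)
    omega
  have hrest : ∑ i ∈ univ.erase j, |w i| = 0 := by
    have := add_sum_erase univ (fun i => |w i|) (mem_univ j)
    omega
  have hzero : ∀ i ≠ j, w i = 0 := fun i hi => abs_eq_zero.1 <|
    (sum_eq_zero_iff_of_nonneg fun i _ => abs_nonneg (w i)).1 hrest i
      (mem_erase.2 ⟨hi, mem_univ i⟩)
  refine ⟨j, ?_⟩
  rcases abs_eq (zero_le_one' ℤ) |>.1 hwj with hj | hj
  · left; ext i; by_cases hi : i = j <;> simp [hi, hj, hzero]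
  · right; ext i; by_cases hi : i = j <;> simp [hi, hj, hzero]

lemma sum_abs_midpoint_sub_le {α : Type*} (s : Finset α) (h : α → ℝ) (a b : ℝ) :
    ∑ x ∈ s, |(a + b) / 2 - h x| ≤ ∑ x ∈ s, |a - h x| + #s * |b - a| / 2 := by
  have hmid : |(a + b) / 2 - a| = |b - a| / 2 := by
    rw [show (a + b) / 2 - a = (b - a) / 2 by ring, abs_div, abs_two]
  calc _ ≤ ∑ x ∈ s, (|a - h x| + |b - a| / 2) :=
        sum_le_sum fun x _ => by linarith [abs_sub_le ((a + b) / 2) a (h x)]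
    _ = _ := by rw [sum_add_distrib, sum_const, nsmul_eq_mul]; ring

lemma sum_powerset_insert_sum_sdiff {ι : Type*} [DecidableEq ι] {I : Finset ι} {j : ι}
    (hj : j ∉ I) (g : Finset ι → ℝ) :
    ∑ J ∈ (insert j I).powerset, ∑ k ∈ insert j I \ J, |g (insert k J) - g J|
      = ∑ J ∈ I.powerset, |g (insert j J) - g J|
        + ∑ J ∈ I.powerset, ∑ k ∈ I \ J, |g (insert k J) - g J|
        + ∑ J ∈ I.powerset, ∑ k ∈ I \ J, |g (insert j (insert k J)) - g (insert j J)| := by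
  have hlow : ∀ J ∈ I.powerset, ∑ k ∈ insert j I \ J, |g (insert k J) - g J|
      = |g (insert j J) - g J| + ∑ k ∈ I \ J, |g (insert k J) - g J| := fun J hJ => by
    rw [insert_sdiff_of_notMem _ fun h => hj (mem_powerset.1 hJ h),
      sum_insert fun h => hj (mem_sdiff.1 h).1]
  have hhigh : ∀ J ∈ I.powerset,
      ∑ k ∈ insert j I \ insert j J, |g (insert k (insert j J)) - g (insert j J)|
        = ∑ k ∈ I \ J, |g (insert j (insert k J)) - g (insert j J)| := fun J _ => by
    rw [insert_sdiff_insert, sdiff_insert_of_notMem hj]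
    exact sum_congr rfl fun k _ => by rw [insert_comm]
  rw [sum_powerset_insert hj, sum_congr rfl hlow, sum_congr rfl hhigh, sum_add_distrib]

theorem sum_abs_avg_sub_le_sum_powerset {ι : Type*} [DecidableEq ι] (I : Finset ι)
    (g : Finset ι → ℝ) :
    ∑ J ∈ I.powerset, |(∑ K ∈ I.powerset, g K) / 2 ^ #I - g J|
      ≤ ∑ J ∈ I.powerset, ∑ k ∈ I \ J, |g (insert k J) - g J| := by
  induction I using Finset.induction_on generalizing g with
  | empty => simp
  | insert j I hj ih =>
    set a₀ := (∑ K ∈ I.powerset, g K) / 2 ^ #I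
    set a₁ := (∑ K ∈ I.powerset, g (insert j K)) / 2 ^ #I
    have havg : (∑ K ∈ (insert j I).powerset, g K) / 2 ^ #(insert j I) = (a₀ + a₁) / 2 := by
      rw [sum_powerset_insert hj, card_insert_of_notMem hj, pow_succ]
      ring
    have hgap : 2 ^ #I * |a₁ - a₀| ≤ ∑ K ∈ I.powerset, |g (insert j K) - g K| := by
      calc 2 ^ #I * |a₁ - a₀| = |∑ K ∈ I.powerset, (g (insert j K) - g K)| := by
            rw [sum_sub_distrib, ← abs_of_pos (by positivity : (0 : ℝ) < 2 ^ #I), ← abs_mul]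
            congr 1
            simp only [a₀, a₁]
            field_simp
        _ ≤ _ := abs_sum_le_sum_abs _ _
    have h₀ := sum_abs_midpoint_sub_le I.powerset g a₀ a₁
    have h₁ := sum_abs_midpoint_sub_le I.powerset (fun J => g (insert j J)) a₁ a₀
    rw [add_comm a₁, abs_sub_comm a₀] at h₁
    rw [card_powerset, Nat.cast_pow, Nat.cast_ofNat] at h₀ h₁
    rw [havg, sum_powerset_insert hj, sum_powerset_insert_sum_sdiff hj]
    linarith [ih g, ih fun J => g (insert j J)]

theorem exists_card_eq_card_mul_sum_le {ι : Type*} [Fintype ι] [DecidableEq ι] (W : ι → ℝ)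
    {r : ℕ} (hr : r ≤ Fintype.card ι) :
    ∃ I : Finset ι, #I = r ∧ Fintype.card ι * ∑ i ∈ I, W i ≤ r * ∑ i, W i := by
  induction r with
  | zero => exact ⟨∅, by simp, by simp⟩
  | succ r ih =>
    obtain ⟨I, hI, hsum⟩ := ih (by omega)
    have hne : Iᶜ.Nonempty := by rw [← card_pos, card_compl, hI]; omega
    obtain ⟨j, hj, hmin⟩ := exists_min_image Iᶜ W hne
    have hjI : j ∉ I := mem_compl.1 hj
    have hcompl : ((Fintype.card ι : ℝ) - r) * W j ≤ ∑ i, W i - ∑ i ∈ I, W i := by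
      calc ((Fintype.card ι : ℝ) - r) * W j = ∑ _i ∈ Iᶜ, W j := by
            rw [sum_const, card_compl, hI, nsmul_eq_mul, Nat.cast_sub (by omega)]
        _ ≤ ∑ i ∈ Iᶜ, W i := sum_le_sum hmin
        _ = _ := by rw [← sum_add_sum_compl I W]; ring
    have hr' : (r : ℝ) + 1 ≤ Fintype.card ι := by exact_mod_cast hr
    refine ⟨insert j I, by rw [card_insert_of_notMem hjI, hI], ?_⟩
    rw [sum_insert hjI]
    push_cast
    -- times `n - r`, the goal is `n • hcompl + (n - r - 1) • hsum`, where `n = card ι`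
    refine le_of_mul_le_mul_left ?_ (by linarith : (0 : ℝ) < Fintype.card ι - r)
    nlinarith [mul_le_mul_of_nonneg_left hsum (by linarith : (0 : ℝ) ≤ Fintype.card ι - r - 1),
      mul_le_mul_of_nonneg_left hcompl (Nat.cast_nonneg (Fintype.card ι) : (0 : ℝ) ≤ _)]

theorem exists_card_eq_sum_le_div_mul_sum {ι : Type*} [Fintype ι] [DecidableEq ι]
    (W : ι → ℝ) {r : ℕ} (hr : r ≤ Fintype.card ι) :
    ∃ I : Finset ι, #I = r ∧ ∑ i ∈ I, W i ≤ r / Fintype.card ι * ∑ i, W i := by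
  obtain ⟨I, hI, hsum⟩ := exists_card_eq_card_mul_sum_le W hr
  refine ⟨I, hI, ?_⟩
  rcases (Fintype.card ι).eq_zero_or_pos with h | h
  · have : IsEmpty ι := Fintype.card_eq_zero_iff.1 h
    simp [Finset.eq_empty_of_isEmpty I]
  · rw [div_mul_eq_mul_div, le_div_iff₀ (by exact_mod_cast h)]
    linarith

lemma sum_le_finsum {α M : Type*} [AddCommMonoid M] [PartialOrder M] [IsOrderedAddMonoid M]
    {g : α → M} (hg : HasFiniteSupport g) (h₀ : ∀ a, 0 ≤ g a) (s : Finset α) :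
    ∑ a ∈ s, g a ≤ ∑ᶠ a, g a := by
  classical
  rw [finsum_eq_sum_of_support_subset g (s := s ∪ hg.toFinset)
    fun a ha => mem_coe.2 (mem_union_right _ (hg.mem_toFinset.2 ha))]
  exact sum_le_sum_of_subset_of_nonneg subset_union_left fun a _ _ => h₀ a

namespace DF

variable {d : ℕ}

lemma nearestInt_zero : nearestInt 0 = 0 := by
  norm_num [nearestInt]

lemma abs_nearestInt_sub_le (a : ℝ) : |(nearestInt a : ℝ) - a| ≤ 1 / 2 := by
  have h₁ : a - 1 / 2 ≤ nearestInt a := Int.le_ceil _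
  have h₂ : (nearestInt a : ℝ) < a - 1 / 2 + 1 := Int.ceil_lt_add_one _
  rw [abs_le]
  constructor <;> linarith

lemma abs_nearestInt_sub_intCast_le (a : ℝ) (k : ℤ) :
    |(nearestInt a : ℝ) - k| ≤ 2 * |a - k| := by
  rcases eq_or_ne (nearestInt a) k with h | h
  · simp [h]
  · have h₁ : (1 : ℝ) ≤ |(nearestInt a : ℝ) - k| := by
      exact_mod_cast Int.one_le_abs (sub_ne_zero.2 h)
    linarith [abs_sub_le (nearestInt a : ℝ) a k, abs_nearestInt_sub_le a]

lemma baseAdj_iff {u v : Base d} :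
    baseAdj u v ↔ ∃ j, v = u + Pi.single j 1 ∨ u = v + Pi.single j 1 := by
  constructor
  · intro h
    obtain ⟨j, hj | hj⟩ := exists_eq_single_of_sum_abs_eq_one (w := u - v) h
    · exact ⟨j, Or.inr (by linear_combination hj)⟩
    · rw [Pi.single_neg] at hj
      exact ⟨j, Or.inl (by linear_combination -hj)⟩
  · rintro ⟨j, rfl | rfl⟩ <;>
      simp [baseAdj, dist1, Pi.single_apply, apply_ite (abs : ℤ → ℤ)]

lemma injective_edge :
    Injective fun p : Fin d × Base d => s(p.2, p.2 + Pi.single p.1 1) := by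
  rintro ⟨j, u⟩ ⟨j', u'⟩ h
  rcases Sym2.eq_iff.1 h with ⟨rfl, h⟩ | ⟨h₁, h₂⟩
  · have := congrFun (add_left_cancel h) j
    by_cases hj : j = j' <;> simp_all
  · -- `u = u + e_j + e_j'` would raise the coordinate sum by 2
    have := congrArg (fun x : Base d => ∑ i, x i) (h₁.trans (congrArg (· + _) h₂.symm))
    simp [sum_add_distrib] at this
    omega

lemma setOf_isBaseEdge :
    {e | IsBaseEdge e} = Set.range fun p : Fin d × Base d => s(p.2, p.2 + Pi.single p.1 1) := by
  ext e
  constructor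
  · rintro ⟨u, v, huv, rfl⟩
    obtain ⟨j, rfl | rfl⟩ := baseAdj_iff.1 huv
    · exact ⟨(j, u), rfl⟩
    · exact ⟨(j, v), Sym2.eq_swap⟩
  · rintro ⟨⟨j, u⟩, rfl⟩
    exact ⟨u, _, baseAdj_iff.2 ⟨j, Or.inl rfl⟩, rfl⟩

noncomputable def dirTV (f : Base d → ℤ) (j : Fin d) : ℤ :=
  ∑ᶠ u, |f (u + Pi.single j 1) - f u|

lemma IsShift.comp_add {f : Base d → ℤ} (hf : IsShift f) (v : Base d) :
    IsShift fun u => f (u + v) :=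
  HasFiniteSupport.comp_of_injective (f := f) (add_left_injective v) hf

lemma IsShift.hasFiniteSupport_abs_sub {f g : Base d → ℤ} (hf : IsShift f) (hg : IsShift g) :
    HasFiniteSupport fun u => |f u - g u| :=
  HasFiniteSupport.comp (g := abs) (HasFiniteSupport.sub hf hg) abs_zero

theorem TV_eq_sum_dirTV {f : Base d → ℤ} (hf : IsShift f) : TV f = ∑ j, dirTV f j := by
  have hfin : HasFiniteSupport fun p : Fin d × Base d => |f (p.2 + Pi.single p.1 1) - f p.2| := by
    refine (Set.finite_iUnion fun j =>
      ((hf.comp_add (Pi.single j 1)).hasFiniteSupport_abs_sub hf).image (Prod.mk j)).subset ?_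
    rintro ⟨j, u⟩ hp
    exact Set.mem_iUnion.2 ⟨j, u, hp, rfl⟩
  rw [TV, setOf_isBaseEdge, finsum_mem_range injective_edge, ← finsum_eq_sum_of_fintype]
  unfold dirTV
  rw [← finsum_curry _ hfin]
  exact finsum_congr fun p => abs_sub_comm _ _

lemma dirTV_le_add {f g : Base d → ℤ} (hf : IsShift f) (hg : IsShift g) (j : Fin d) :
    dirTV f j ≤ dirTV g j + 2 * ∑ᶠ u, |f u - g u| := by
  set e : Base d := Pi.single j 1
  have hg' : HasFiniteSupport fun u => |g (u + e) - g u| :=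
    (hg.comp_add e).hasFiniteSupport_abs_sub hg
  have hδe : HasFiniteSupport fun u => |f (u + e) - g (u + e)| :=
    (hf.comp_add e).hasFiniteSupport_abs_sub (hg.comp_add e)
  have hδ : HasFiniteSupport fun u => |f u - g u| := hf.hasFiniteSupport_abs_sub hg
  have hsum : HasFiniteSupport fun u => |g (u + e) - g u| + |f (u + e) - g (u + e)| :=
    hg'.add hδe
  have htranslate : ∑ᶠ u, |f (u + e) - g (u + e)| = ∑ᶠ u, |f u - g u| :=
    finsum_comp_equiv (Equiv.addRight e) (f := fun u => |f u - g u|)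
  calc dirTV f j
      ≤ ∑ᶠ u, (|g (u + e) - g u| + |f (u + e) - g (u + e)| + |f u - g u|) :=
        finsum_le_finsum' ((hf.comp_add e).hasFiniteSupport_abs_sub hf) (hsum.add hδ)
          fun u => by grind
    _ = dirTV g j + 2 * ∑ᶠ u, |f u - g u| := by
        rw [finsum_add_distrib hsum hδ, finsum_add_distrib hg' hδe, htranslate, dirTV]
        ring

theorem TV_le_TV_add {f g : Base d → ℤ} (hf : IsShift f) (hg : IsShift g) :
    TV f ≤ TV g + 2 * d * ∑ᶠ u, |f u - g u| := by
  rw [TV_eq_sum_dirTV hf, TV_eq_sum_dirTV hg]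
  calc ∑ j, dirTV f j ≤ ∑ j : Fin d, (dirTV g j + 2 * ∑ᶠ u, |f u - g u|) :=
        sum_le_sum fun j _ => dirTV_le_add hf hg j
    _ = _ := by simp [sum_add_distrib]; ring

lemma TV_nonneg (f : Base d → ℤ) : 0 ≤ TV f :=
  finsum_nonneg fun e => finsum_nonneg fun _ => Sym2.ind (fun _ _ => abs_nonneg _) e

def cellVertex (c : Base d) (J : Finset (Fin d)) : Base d := c + ∑ k ∈ J, Pi.single k 1

lemma cellVertex_apply (c : Base d) (J : Finset (Fin d)) (i : Fin d) :
    cellVertex c J i = c i + if i ∈ J then 1 else 0 := by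
  simp [cellVertex, Finset.sum_apply, Pi.single_apply]

lemma cellVertex_insert (c : Base d) {J : Finset (Fin d)} {k : Fin d} (hk : k ∉ J) :
    cellVertex c (insert k J) = cellVertex c J + Pi.single k 1 := by
  rw [cellVertex, cellVertex, sum_insert hk]
  abel

lemma cellVertex_injective (c : Base d) : Injective (cellVertex c) := by
  intro J J' h
  ext i
  have := congrFun h i
  simp only [cellVertex_apply] at this
  split_ifs at this <;> simp_all

lemma even_cellVertex_iff {c : Base d} {k : Fin d} (hc : Even (c k)) (J : Finset (Fin d)) :
    Even (cellVertex c J k) ↔ k ∉ J := by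
  by_cases hk : k ∈ J <;> simp [cellVertex_apply, hk, hc]

lemma cellFinset_eq_image (I : Finset (Fin d)) (c : Base d) :
    cellFinset I c = I.powerset.image (cellVertex c) := by
  ext u
  simp only [cellFinset, Fintype.mem_piFinset, mem_image, mem_powerset]
  constructor
  · intro hu
    refine ⟨I.filter fun i => u i ≠ c i, filter_subset _ _, funext fun i => ?_⟩
    have := hu i
    by_cases hi : i ∈ I <;> simp_all [cellVertex_apply]; omega
  · rintro ⟨J, hJ, rfl⟩ i
    by_cases hi : i ∈ I <;> by_cases hiJ : i ∈ J <;> simp_all [cellVertex_apply]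
    exact hi (hJ hiJ)

lemma card_cellFinset (I : Finset (Fin d)) (c : Base d) : #(cellFinset I c) = 2 ^ #I := by
  rw [cellFinset_eq_image, card_image_of_injective _ (cellVertex_injective c), card_powerset]

lemma even_cellPt {I : Finset (Fin d)} {i : Fin d} (hi : i ∈ I) (v : Base d) :
    Even (cellPt I v i) := by
  simp [cellPt, hi]

lemma mem_cellFinset_cellPt_iff {I : Finset (Fin d)} {v w : Base d} :
    w ∈ cellFinset I (cellPt I v) ↔ cellPt I w = cellPt I v := by
  simp only [cellFinset, Fintype.mem_piFinset, funext_iff, cellPt,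
    Int.fdiv_eq_ediv_of_nonneg _ zero_le_two]
  refine forall_congr' fun i => ?_
  by_cases hi : i ∈ I <;> simp [hi]
  omega

theorem sum_abs_cellAvg_sub_le {I : Finset (Fin d)} {c : Base d} (hc : ∀ i ∈ I, Even (c i))
    (f : Base d → ℝ) :
    ∑ w ∈ cellFinset I c, |(∑ w' ∈ cellFinset I c, f w') / 2 ^ #I - f w|
      ≤ ∑ w ∈ cellFinset I c, ∑ k ∈ I with Even (w k), |f (w + Pi.single k 1) - f w| := by
  have hinj := (cellVertex_injective c).injOn (s := I.powerset)
  rw [cellFinset_eq_image, sum_image hinj, sum_image hinj, sum_image hinj]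
  refine (sum_abs_avg_sub_le_sum_powerset I (f ∘ cellVertex c)).trans_eq
    (sum_congr rfl fun J _ => ?_)
  have hfilter : I \ J = I.filter fun k => Even (cellVertex c J k) := by
    ext k
    by_cases hk : k ∈ I <;> simp [hk, even_cellVertex_iff (hc k _)]
  rw [hfilter]
  refine sum_congr rfl fun k hk => ?_
  have hkJ : k ∉ J := (even_cellVertex_iff (hc k (mem_filter.1 hk).1) J).1 (mem_filter.1 hk).2
  simp [cellVertex_insert c hkJ]

lemma sum_sum_cellFinset_cellPt {I : Finset (Fin d)} {V : Finset (Base d)}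
    (hV : ∀ v ∈ V, ∀ w, cellPt I w = cellPt I v → w ∈ V) (F : Base d → ℝ) :
    ∑ v ∈ V, ∑ w ∈ cellFinset I (cellPt I v), F w = 2 ^ #I * ∑ v ∈ V, F v := by
  rw [sum_comm' (t' := V) (s' := fun w => cellFinset I (cellPt I w))]
  · simp [card_cellFinset, mul_sum]
  · intro v w
    simp only [mem_cellFinset_cellPt_iff]
    exact ⟨fun ⟨hv, h⟩ => ⟨h.symm, hV v hv w h⟩,
      fun ⟨h, hw⟩ => ⟨hV w hw v h, h.symm⟩⟩

noncomputable def cellHull (I : Finset (Fin d)) (s : Finset (Base d)) : Finset (Base d) :=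
  s.biUnion fun v => cellFinset I (cellPt I v)

lemma mem_cellHull {I : Finset (Fin d)} {s : Finset (Base d)} {w : Base d} :
    w ∈ cellHull I s ↔ ∃ v ∈ s, cellPt I w = cellPt I v := by
  simp [cellHull, mem_cellFinset_cellPt_iff]

noncomputable def cellAvg (I : Finset (Fin d)) (f : Base d → ℤ) (v : Base d) : ℝ :=
  (∑ w ∈ cellFinset I (cellPt I v), (f w : ℝ)) / 2 ^ #I

lemma mem_cellHull_of_cellAvg_ne_zero {f : Base d → ℤ} (hf : IsShift f) {I : Finset (Fin d)}
    {v : Base d} (h : cellAvg I f v ≠ 0) : v ∈ cellHull I hf.toFinset := by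
  obtain ⟨w, hw, hfw⟩ := exists_ne_zero_of_sum_ne_zero (div_ne_zero_iff.1 h).1
  exact mem_cellHull.2 ⟨w, hf.mem_toFinset.2 (by exact_mod_cast hfw),
    (mem_cellFinset_cellPt_iff.1 hw).symm⟩

lemma IsShift.fine {f : Base d → ℤ} (hf : IsShift f) (I : Finset (Fin d)) :
    IsShift (fine I f) := by
  refine (cellHull I hf.toFinset).finite_toSet.subset fun v hv => ?_
  refine mem_cellHull_of_cellAvg_ne_zero hf fun h => hv ?_
  change nearestInt (cellAvg I f v) = 0
  rw [h, nearestInt_zero]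

lemma support_abs_cellAvg_sub_subset {f : Base d → ℤ} (hf : IsShift f) (I : Finset (Fin d)) :
    support (fun v => |cellAvg I f v - f v|) ⊆ cellHull I hf.toFinset := by
  intro v hv
  by_contra hV
  have h₁ : cellAvg I f v = 0 := not_imp_comm.1 (mem_cellHull_of_cellAvg_ne_zero hf) hV
  have h₂ : f v = 0 := not_imp_comm.1
    (fun h => mem_cellHull.2 ⟨v, hf.mem_toFinset.2 h, rfl⟩) hV
  simp [h₁, h₂] at hv

def evenEdgeDiff (f : Base d → ℤ) (j : Fin d) (u : Base d) : ℤ :=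
  if Even (u j) then |f (u + Pi.single j 1) - f u| else 0

noncomputable def evenDirTV (f : Base d → ℤ) (j : Fin d) : ℤ := ∑ᶠ u, evenEdgeDiff f j u

lemma evenEdgeDiff_nonneg (f : Base d → ℤ) (j : Fin d) (u : Base d) :
    0 ≤ evenEdgeDiff f j u := by
  unfold evenEdgeDiff
  split_ifs <;> simp

lemma IsShift.hasFiniteSupport_evenEdgeDiff {f : Base d → ℤ} (hf : IsShift f) (j : Fin d) :
    HasFiniteSupport (evenEdgeDiff f j) :=
  ((hf.comp_add (Pi.single j 1)).hasFiniteSupport_abs_sub hf).subset fun u hu => by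
    by_contra h
    simp_all [evenEdgeDiff]

lemma sum_evenDirTV_le_TV {f : Base d → ℤ} (hf : IsShift f) :
    ∑ j, evenDirTV f j ≤ TV f := by
  rw [TV_eq_sum_dirTV hf]
  refine sum_le_sum fun j _ => finsum_le_finsum' (hf.hasFiniteSupport_evenEdgeDiff j)
    ((hf.comp_add (Pi.single j 1)).hasFiniteSupport_abs_sub hf) fun u => ?_
  unfold evenEdgeDiff
  split_ifs <;> simp

lemma sum_abs_cellAvg_sub_le_sum_evenEdgeDiff (f : Base d → ℤ) (I : Finset (Fin d))
    (v : Base d) :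
    ∑ w ∈ cellFinset I (cellPt I v), |cellAvg I f w - f w|
      ≤ ∑ w ∈ cellFinset I (cellPt I v), ∑ k ∈ I, (evenEdgeDiff f k w : ℝ) := by
  rw [sum_congr rfl fun w hw => by rw [cellAvg, mem_cellFinset_cellPt_iff.1 hw]]
  refine (sum_abs_cellAvg_sub_le (fun i hi => even_cellPt hi v) _).trans_eq
    (sum_congr rfl fun w _ => ?_)
  rw [sum_filter]
  refine sum_congr rfl fun k _ => ?_
  unfold evenEdgeDiff
  split_ifs <;> simp

theorem finsum_abs_cellAvg_sub_le {f : Base d → ℤ} (hf : IsShift f) (I : Finset (Fin d)) :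
    ∑ᶠ v, |cellAvg I f v - f v| ≤ ∑ k ∈ I, (evenDirTV f k : ℝ) := by
  set V := cellHull I hf.toFinset
  have hV : ∀ v ∈ V, ∀ w, cellPt I w = cellPt I v → w ∈ V := fun v hv w h => by
    obtain ⟨v₀, hv₀, h₀⟩ := mem_cellHull.1 hv
    exact mem_cellHull.2 ⟨v₀, hv₀, h.trans h₀⟩
  have hN : (0 : ℝ) < 2 ^ #I := by positivity
  calc ∑ᶠ v, |cellAvg I f v - f v|
      = ∑ v ∈ V, |cellAvg I f v - f v| :=
        finsum_eq_sum_of_support_subset _ (support_abs_cellAvg_sub_subset hf I)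
    _ = (∑ v ∈ V, ∑ w ∈ cellFinset I (cellPt I v), |cellAvg I f w - f w|) / 2 ^ #I := by
        rw [sum_sum_cellFinset_cellPt hV]
        field_simp
    _ ≤ (∑ v ∈ V, ∑ w ∈ cellFinset I (cellPt I v), ∑ k ∈ I, (evenEdgeDiff f k w : ℝ))
          / 2 ^ #I :=
        div_le_div_of_nonneg_right
          (sum_le_sum fun v _ => sum_abs_cellAvg_sub_le_sum_evenEdgeDiff f I v) hN.le
    _ = ∑ v ∈ V, ∑ k ∈ I, (evenEdgeDiff f k v : ℝ) := by
        rw [sum_sum_cellFinset_cellPt hV]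
        field_simp
    _ = ∑ k ∈ I, ((∑ v ∈ V, evenEdgeDiff f k v : ℤ) : ℝ) := by
        rw [sum_comm]
        push_cast
        rfl
    _ ≤ ∑ k ∈ I, (evenDirTV f k : ℝ) := by
        gcongr with k
        exact_mod_cast sum_le_finsum (hf.hasFiniteSupport_evenEdgeDiff k)
          (evenEdgeDiff_nonneg f k) V

theorem finsum_abs_fine_sub_le {f : Base d → ℤ} (hf : IsShift f) (I : Finset (Fin d)) :
    ∑ᶠ v, |(fine I f v : ℝ) - f v| ≤ 2 * ∑ k ∈ I, (evenDirTV f k : ℝ) := by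
  have hfin : HasFiniteSupport fun v => 2 * |cellAvg I f v - f v| :=
    HasFiniteSupport.mul_right (fun _ => 2)
      ((cellHull I hf.toFinset).finite_toSet.subset (support_abs_cellAvg_sub_subset hf I))
  calc ∑ᶠ v, |(fine I f v : ℝ) - f v|
      ≤ ∑ᶠ v, 2 * |cellAvg I f v - f v| :=
        finsum_le_finsum' (((hf.fine I).hasFiniteSupport_abs_sub hf).subset fun v hv => by
          simpa [sub_eq_zero] using hv)
          hfin fun v => abs_nearestInt_sub_intCast_le _ _
    _ ≤ 2 * ∑ k ∈ I, (evenDirTV f k : ℝ) := by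
        rw [← mul_finsum]
        gcongr
        exact finsum_abs_cellAvg_sub_le hf I

theorem TV_fine_le {f : Base d → ℤ} (hf : IsShift f) (I : Finset (Fin d)) :
    (TV (fine I f) : ℝ) ≤ TV f + 4 * d * ∑ k ∈ I, (evenDirTV f k : ℝ) := by
  have hcast :
      ((∑ᶠ v, |fine I f v - f v| : ℤ) : ℝ) = ∑ᶠ v, |(fine I f v : ℝ) - f v| := by
    simpa using map_finsum (Int.castAddHom ℝ) ((hf.fine I).hasFiniteSupport_abs_sub hf)
  have h := TV_le_TV_add (hf.fine I) hf
  have hd : (0 : ℝ) ≤ d := d.cast_nonneg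
  rify at h
  rw [hcast] at h
  nlinarith [finsum_abs_fine_sub_le hf I]

end DF

theorem exists_compatible_fine_graining_general
    (d : ℕ) (τ : Base d → ℤ) (hτ : IsShift τ) (r : ℕ) (hr : r ≤ d) :
    ∃ I : Finset (Fin d), I.card = r ∧
      TV (fine I τ) ≤ 20 * (2 * (r : ℤ) + 1) * TV τ ∧
      (∑ᶠ v : Base d, (|fine I τ v - τ v| : ℝ)) ≤ 4 * (r : ℝ) / (d : ℝ) * (TV τ : ℝ) := by
  obtain ⟨I, hIr, hI⟩ :=
    exists_card_eq_sum_le_div_mul_sum (fun j => (evenDirTV τ j : ℝ)) (r := r) (by simpa using hr)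
  rw [Fintype.card_fin] at hI
  have hW : ∑ j, (evenDirTV τ j : ℝ) ≤ TV τ := by exact_mod_cast sum_evenDirTV_le_TV hτ
  have hTV : (0 : ℝ) ≤ TV τ := by exact_mod_cast TV_nonneg τ
  have hrd : (0 : ℝ) ≤ r / d := by positivity
  have hWI : ∑ j ∈ I, (evenDirTV τ j : ℝ) ≤ r / d * TV τ := hI.trans (by gcongr)
  have hdrd : (d : ℝ) * (r / d) = r :=
    mul_div_cancel_of_imp' fun h => by
      rw [Nat.cast_eq_zero] at h ⊢
      omega
  refine ⟨I, hIr, ?_, ?_⟩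
  · have := TV_fine_le hτ I
    have : (TV (fine I τ) : ℝ) ≤ 20 * (2 * r + 1) * TV τ := by nlinarith
    exact_mod_cast this
  · have := finsum_abs_fine_sub_le hτ I
    rw [mul_div_assoc]
    nlinarith

/-- For every shift `τ` and every `0 ≤ r ≤ d` there is a set
`I ⊆ [d]` with `|I| = r` compatible with `τ`, i.e., with
`TV(τ_I) ≤ 20(2|I|+1) TV(τ)` and `‖τ_I − τ‖₁ ≤ (4|I|/d) TV(τ)`. -/
theorem exists_compatible_fine_graining
    (d : ℕ) (hd : 1 ≤ d) (τ : Base d → ℤ) (hτ : IsShift τ) (r : ℕ) (hr : r ≤ d) :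
    ∃ I : Finset (Fin d), I.card = r ∧
      TV (fine I τ) ≤ 20 * (2 * (r : ℤ) + 1) * TV τ ∧
      (∑ᶠ v : Base d, (|fine I τ v - τ v| : ℝ)) ≤ 4 * (r : ℝ) / (d : ℝ) * (TV τ : ℝ) :=
  exists_compatible_fine_graining_general d τ hτ r hr
end
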